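/- arXiv:2510.27682 — 4 statements merged into one kernel-verified Lean document; each statement's English description precedes it below -/
import Mathlib

section
/- Let α > -1 and let ρ : ℝ → ℝ be a nonnegative, continuously differentiable function with ρ ∈ L¹(ℝ) and with the derivative of ρ^{(2+α)/2} belonging to L²(ℝ). Then there is a constant C, depending only on α, such that ‖ρ‖_{L^∞(ℝ)}^{(α+3)/2} ≤ C · ‖ρ‖_{L¹(ℝ)}^{1/2} · ‖∂ₓ(ρ^{(2+α)/2})‖_{L²(ℝ)}; equivalently, ‖ρ‖_{L^∞(ℝ)} ≤ C · ‖ρ‖_{L¹(ℝ)}^{1/(α+3)} · ‖∂ₓ(ρ^{(2+α)/2})‖_{L²(ℝ)}^{2/(α+3)}. -/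
open MeasureTheory Filter
open scoped ENNReal NNReal

/-- One-dimensional interpolation inequality with the `L^∞` norm:
for `α > -1` there is a constant `C = C(α) > 0` such that every nonnegative
`C¹` function `ρ ∈ L¹(ℝ)` with `∂ₓ(ρ^((2+α)/2)) ∈ L²(ℝ)` satisfies
`‖ρ‖_{L^∞}^((α+3)/2) ≤ C ‖ρ‖_{L¹}^(1/2) ‖∂ₓ(ρ^((2+α)/2))‖_{L²}`, and equivalently
`‖ρ‖_{L^∞} ≤ C ‖ρ‖_{L¹}^(1/(α+3)) ‖∂ₓ(ρ^((2+α)/2))‖_{L²}^(2/(α+3))`. -/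
theorem stmt3 (α : ℝ) (hα : -1 < α) :
    ∃ C : ℝ, 0 < C ∧ ∀ ρ : ℝ → ℝ,
      (∀ x, 0 ≤ ρ x) → ContDiff ℝ 1 ρ → Integrable ρ (volume : Measure ℝ) →
      MemLp (deriv fun x => ρ x ^ ((2 + α) / 2)) 2 (volume : Measure ℝ) →
      (eLpNorm ρ ⊤ (volume : Measure ℝ) ^ ((α + 3) / 2) ≤
        ENNReal.ofReal C
          * eLpNorm ρ 1 (volume : Measure ℝ) ^ ((1 : ℝ) / 2)
          * eLpNorm (deriv fun x => ρ x ^ ((2 + α) / 2)) 2 (volume : Measure ℝ)) ∧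
      (eLpNorm ρ ⊤ (volume : Measure ℝ) ≤
        ENNReal.ofReal C
          * eLpNorm ρ 1 (volume : Measure ℝ) ^ (1 / (α + 3))
          * eLpNorm (deriv fun x => ρ x ^ ((2 + α) / 2)) 2 (volume : Measure ℝ)
              ^ (2 / (α + 3))) := by
  set p : ℝ := (2 + α) / 2 with hp_def
  set q : ℝ := (α + 3) / 2 with hq_def
  have hp0 : 0 < p := by rw [hp_def]; linarith
  have hq1 : 1 < q := by rw [hq_def]; linarith
  have hq0 : 0 < q := lt_trans one_pos hq1
  have hC0 : (0:ℝ) < q / p + 1 := by positivity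
  have hC1 : (1:ℝ) ≤ q / p + 1 := by linarith [div_nonneg hq0.le hp0.le]
  refine ⟨q / p + 1, hC0, ?_⟩
  intro ρ hρ0 hρC1 hρInt hu2
  set u' : ℝ → ℝ := deriv fun x => ρ x ^ p with hu'_def
  set h : ℝ → ℝ := fun x => q / p * (Real.sqrt (ρ x) * u' x) with hh_def
  -- the derivative identity
  have hg : ∀ x, HasDerivAt (fun x => ρ x ^ q) (h x) x := by
    intro x
    have hdρ : HasDerivAt ρ (deriv ρ x) x := (hρC1.differentiable one_ne_zero x).hasDerivAt
    have hd := hdρ.rpow_const (p := q) (Or.inr hq1.le)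
    convert hd using 1
    by_cases hx : ρ x = 0
    · rw [hh_def]
      simp only [hx, Real.sqrt_zero, Real.zero_rpow (by linarith : q - 1 ≠ 0)]
      ring
    · have hu : HasDerivAt (fun x => ρ x ^ p) (deriv ρ x * p * ρ x ^ (p - 1)) x :=
        hdρ.rpow_const (Or.inl hx)
      rw [hh_def]
      simp only [hu'_def, hu.deriv]
      have hxpos : 0 < ρ x := lt_of_le_of_ne (hρ0 x) (Ne.symm hx)
      rw [Real.sqrt_eq_rpow]
      have : ρ x ^ ((1:ℝ)/2) * (deriv ρ x * p * ρ x ^ (p - 1))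
          = p * (ρ x ^ ((1:ℝ)/2) * ρ x ^ (p - 1)) * deriv ρ x := by ring
      rw [this, ← Real.rpow_add hxpos]
      have h2 : (1:ℝ)/2 + (p - 1) = q - 1 := by rw [hp_def, hq_def]; ring
      rw [h2]
      field_simp
  -- measurability
  have hmeas : AEStronglyMeasurable (fun x => Real.sqrt (ρ x) * u' x) volume :=
    ((Real.continuous_sqrt.comp hρC1.continuous).aestronglyMeasurable).mul hu2.1
  -- Hölder (Cauchy–Schwarz) in lintegral form
  have hconj : Real.HolderConjugate 2 2 := by constructor <;> norm_num
  have key := ENNReal.lintegral_mul_le_Lp_mul_Lq (volume : Measure ℝ) hconj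
      (f := fun x => (‖Real.sqrt (ρ x)‖₊ : ℝ≥0∞)) (g := fun x => (‖u' x‖₊ : ℝ≥0∞))
      ((Real.continuous_sqrt.comp hρC1.continuous).measurable.nnnorm.coe_nnreal_ennreal.aemeasurable)
      (hu2.1.aemeasurable.nnnorm.coe_nnreal_ennreal)
  have hFsq : ∫⁻ x, (‖Real.sqrt (ρ x)‖₊ : ℝ≥0∞) ^ (2:ℝ) = eLpNorm ρ 1 volume := by
    rw [eLpNorm_one_eq_lintegral_enorm]
    refine lintegral_congr fun x => ?_
    rw [← enorm_eq_nnnorm, Real.enorm_eq_ofReal (Real.sqrt_nonneg _),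
        ENNReal.ofReal_rpow_of_nonneg (Real.sqrt_nonneg _) (by norm_num)]
    rw [show (2:ℝ) = ((2:ℕ):ℝ) by norm_num, Real.rpow_natCast, Real.sq_sqrt (hρ0 x),
        ← Real.enorm_eq_ofReal (hρ0 x)]
  have hGsq : (∫⁻ x, (‖u' x‖₊ : ℝ≥0∞) ^ (2:ℝ)) ^ ((1:ℝ)/2) = eLpNorm u' 2 volume := by
    rw [eLpNorm_eq_lintegral_rpow_enorm_toReal (by norm_num) (by norm_num)]
    norm_num
    rfl
  have key2 : ∫⁻ x, (‖Real.sqrt (ρ x)‖₊ : ℝ≥0∞) * ‖u' x‖₊ ∂volume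
      ≤ eLpNorm ρ 1 volume ^ ((1:ℝ)/2) * eLpNorm u' 2 volume := by
    calc ∫⁻ x, (‖Real.sqrt (ρ x)‖₊ : ℝ≥0∞) * ‖u' x‖₊ ∂volume
        ≤ (∫⁻ x, (‖Real.sqrt (ρ x)‖₊ : ℝ≥0∞) ^ (2:ℝ) ∂volume) ^ ((1:ℝ)/2)
          * (∫⁻ x, (‖u' x‖₊ : ℝ≥0∞) ^ (2:ℝ) ∂volume) ^ ((1:ℝ)/2) := key
      _ = eLpNorm ρ 1 volume ^ ((1:ℝ)/2) * eLpNorm u' 2 volume := by rw [hFsq, hGsq]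
  have hA_top : eLpNorm ρ 1 volume < ⊤ := (memLp_one_iff_integrable.mpr hρInt).2
  have hB_top : eLpNorm u' 2 volume < ⊤ := hu2.2
  -- integrability of √ρ · u'
  have hI0 : Integrable (fun x => Real.sqrt (ρ x) * u' x) volume := by
    refine ⟨hmeas, ?_⟩
    show (∫⁻ x, (‖Real.sqrt (ρ x) * u' x‖₊ : ℝ≥0∞) ∂volume) < ⊤
    calc ∫⁻ x, (‖Real.sqrt (ρ x) * u' x‖₊ : ℝ≥0∞) ∂volume
        = ∫⁻ x, (‖Real.sqrt (ρ x)‖₊ : ℝ≥0∞) * ‖u' x‖₊ ∂volume := by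
          refine lintegral_congr fun x => ?_
          rw [nnnorm_mul, ENNReal.coe_mul]
      _ ≤ eLpNorm ρ 1 volume ^ ((1:ℝ)/2) * eLpNorm u' 2 volume := key2
      _ < ⊤ := ENNReal.mul_lt_top (ENNReal.rpow_lt_top_of_nonneg (by norm_num) hA_top.ne) hB_top
  have hInt : Integrable h volume := by
    rw [hh_def]
    exact hI0.const_mul _
  -- the real integral of ‖h‖ and its bound
  set I : ℝ := ∫ x, ‖h x‖ ∂volume with hI_def
  have hInn : 0 ≤ I := integral_nonneg fun x => norm_nonneg _
  have hIbd : ENNReal.ofReal I ≤ ENNReal.ofReal (q/p)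
      * (eLpNorm ρ 1 volume ^ ((1:ℝ)/2) * eLpNorm u' 2 volume) := by
    rw [hI_def, ofReal_integral_norm_eq_lintegral_enorm hInt]
    have : ∀ x, (‖h x‖₊ : ℝ≥0∞)
        = ENNReal.ofReal (q/p) * ((‖Real.sqrt (ρ x)‖₊ : ℝ≥0∞) * ‖u' x‖₊) := by
      intro x
      rw [hh_def]
      simp only [nnnorm_mul, ENNReal.coe_mul]
      congr 1
      rw [← enorm_eq_nnnorm, Real.enorm_eq_ofReal (by positivity : (0:ℝ) ≤ q/p)]
    simp only [enorm_eq_nnnorm]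
    rw [lintegral_congr this, lintegral_const_mul' _ _ ENNReal.ofReal_ne_top]
    exact mul_le_mul_right key2 _
  -- pointwise bound via FTC
  have hpt : ∀ x, ρ x ^ q ≤ I := by
    intro x
    refine le_of_forall_pos_le_add fun ε hε => ?_
    -- find a point where ρ is small
    obtain ⟨y, hy⟩ : ∃ y, ρ y < ε ^ (1/q) := by
      by_contra hcon
      push_neg at hcon
      have heps : 0 < ε ^ (1/q) := Real.rpow_pos_of_pos hε _
      have : Integrable (fun _ : ℝ => ε ^ (1/q)) volume :=
        hρInt.mono' aestronglyMeasurable_const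
          (ae_of_all _ fun y => by
            rw [Real.norm_eq_abs, abs_of_nonneg heps.le]; exact hcon y)
      rw [integrable_const_iff] at this
      rcases this with h0 | hvol
      · exact heps.ne' h0
      · have := hvol.measure_univ_lt_top; simp [Real.volume_univ] at this
    have hftc := intervalIntegral.integral_eq_sub_of_hasDerivAt
      (f := fun x => ρ x ^ q) (a := y) (b := x) (fun t _ => hg t) hInt.intervalIntegrable
    have habs : |∫ t in y..x, h t| ≤ I := by
      rw [← Real.norm_eq_abs]
      calc ‖∫ t in y..x, h t‖ ≤ ∫ t in Set.uIoc y x, ‖h t‖ ∂volume :=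
            intervalIntegral.norm_integral_le_integral_norm_uIoc
        _ ≤ I := setIntegral_le_integral hInt.norm (ae_of_all _ fun t => norm_nonneg _)
    have hyq : ρ y ^ q ≤ ε := by
      calc ρ y ^ q ≤ (ε ^ (1/q)) ^ q := Real.rpow_le_rpow (hρ0 y) hy.le hq0.le
        _ = ε := by rw [← Real.rpow_mul hε.le, one_div_mul_cancel hq0.ne', Real.rpow_one]
    have : ρ x ^ q = ρ y ^ q + ∫ t in y..x, h t := by rw [hftc]; ring
    calc ρ x ^ q = ρ y ^ q + ∫ t in y..x, h t := this
      _ ≤ ε + I := add_le_add hyq ((le_abs_self _).trans habs)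
      _ = I + ε := add_comm _ _
  -- L^∞ bound
  set M : ℝ := I ^ (1/q) with hM_def
  have hMnn : 0 ≤ M := Real.rpow_nonneg hInn _
  have hMq : M ^ q = I := by
    rw [hM_def, ← Real.rpow_mul hInn, one_div_mul_cancel hq0.ne', Real.rpow_one]
  have hLinf : eLpNorm ρ ⊤ volume ≤ ENNReal.ofReal M := by
    rw [eLpNorm_exponent_top]
    refine eLpNormEssSup_le_of_ae_bound (ae_of_all _ fun x => ?_)
    rw [Real.norm_eq_abs, abs_of_nonneg (hρ0 x)]
    calc ρ x = (ρ x ^ q) ^ (1/q) := by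
          rw [← Real.rpow_mul (hρ0 x), mul_one_div_cancel hq0.ne', Real.rpow_one]
      _ ≤ I ^ (1/q) := Real.rpow_le_rpow (Real.rpow_nonneg (hρ0 x) _) (hpt x) (by positivity)
  -- first inequality
  have first : eLpNorm ρ ⊤ volume ^ q ≤ ENNReal.ofReal (q/p+1)
      * eLpNorm ρ 1 volume ^ ((1:ℝ)/2) * eLpNorm u' 2 volume := by
    calc eLpNorm ρ ⊤ volume ^ q ≤ (ENNReal.ofReal M) ^ q :=
          ENNReal.rpow_le_rpow hLinf hq0.le
      _ = ENNReal.ofReal (M ^ q) := ENNReal.ofReal_rpow_of_nonneg hMnn hq0.le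
      _ = ENNReal.ofReal I := by rw [hMq]
      _ ≤ ENNReal.ofReal (q/p) * (eLpNorm ρ 1 volume ^ ((1:ℝ)/2) * eLpNorm u' 2 volume) := hIbd
      _ ≤ ENNReal.ofReal (q/p+1) * (eLpNorm ρ 1 volume ^ ((1:ℝ)/2) * eLpNorm u' 2 volume) :=
          mul_le_mul_left (ENNReal.ofReal_le_ofReal (by linarith)) _
      _ = ENNReal.ofReal (q/p+1) * eLpNorm ρ 1 volume ^ ((1:ℝ)/2) * eLpNorm u' 2 volume :=
          (mul_assoc _ _ _).symm
  refine ⟨first, ?_⟩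
  -- second inequality
  have h2 := ENNReal.rpow_le_rpow first (by positivity : (0:ℝ) ≤ 1/q)
  rw [← ENNReal.rpow_mul, mul_one_div_cancel hq0.ne', ENNReal.rpow_one] at h2
  rw [ENNReal.mul_rpow_of_nonneg _ _ (by positivity : (0:ℝ) ≤ 1/q),
      ENNReal.mul_rpow_of_nonneg _ _ (by positivity : (0:ℝ) ≤ 1/q),
      ← ENNReal.rpow_mul] at h2
  have e1 : (1:ℝ)/2 * (1/q) = 1/(α+3) := by
    rw [hq_def]; field_simp
  have e2 : (1:ℝ)/q = 2/(α+3) := by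
    rw [hq_def]; field_simp
  rw [e1, e2] at h2
  refine h2.trans ?_
  have hof1 : (1:ℝ≥0∞) ≤ ENNReal.ofReal (q/p+1) := ENNReal.one_le_ofReal.mpr hC1
  have : ENNReal.ofReal (q/p+1) ^ ((2:ℝ)/(α+3)) ≤ ENNReal.ofReal (q/p+1) := by
    have h3 : (2:ℝ)/(α+3) ≤ 1 := by
      rw [div_le_one (by linarith : (0:ℝ) < α+3)]; linarith
    calc ENNReal.ofReal (q/p+1) ^ ((2:ℝ)/(α+3))
        ≤ ENNReal.ofReal (q/p+1) ^ (1:ℝ) :=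
          ENNReal.rpow_le_rpow_of_exponent_le hof1 h3
      _ = ENNReal.ofReal (q/p+1) := ENNReal.rpow_one _
  calc ENNReal.ofReal (q/p+1) ^ ((2:ℝ)/(α+3)) * eLpNorm ρ 1 volume ^ ((1:ℝ)/(α+3))
        * eLpNorm u' 2 volume ^ ((2:ℝ)/(α+3))
      ≤ ENNReal.ofReal (q/p+1) * eLpNorm ρ 1 volume ^ ((1:ℝ)/(α+3))
        * eLpNorm u' 2 volume ^ ((2:ℝ)/(α+3)) :=
        mul_le_mul_left (mul_le_mul_left this _) _
    _ = ENNReal.ofReal (q/p+1) * eLpNorm ρ 1 volume ^ (1/(α+3))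
        * eLpNorm u' 2 volume ^ (2/(α+3)) := by norm_num
end

section
/- Let γ > 1, let (Ω, μ) be a measure space, let r : Ω → ℝ be measurable with 0 ≤ r(x) ≤ M for some M > 0, and let (ρ_n) be a sequence of nonnegative measurable functions on Ω such that ∫_Ω f(ρ_n|r) dμ → 0 as n → ∞. Then ρ_n converges to r in measure: for every σ > 0, μ({x ∈ Ω : |ρ_n(x) − r(x)| > σ}) → 0 as n → ∞. -/
open MeasureTheory Filter

private lemma cont_rpow_const {p : ℝ} (hp : 0 < p) : Continuous fun x : ℝ => x ^ p :=
  continuous_iff_continuousAt.2 fun x => Real.continuousAt_rpow_const x p (Or.inr hp.le)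

private lemma stmt6_key (γ M σ : ℝ) (hγ : 1 < γ) (hM : 0 < M) (hσ : 0 < σ) :
    ∃ c > 0, ∀ a ∈ Set.Icc (0:ℝ) M, ∀ b : ℝ, 0 ≤ b → σ < |b - a| →
      c ≤ b ^ γ / (γ - 1) - γ * a ^ (γ - 1) * b / (γ - 1) + a ^ γ := by
  have hγ0 : (0:ℝ) < γ := by linarith
  have hγ1 : (0:ℝ) < γ - 1 := by linarith
  have hγ1' : γ - 1 ≠ 0 := ne_of_gt hγ1
  set F : ℝ → ℝ → ℝ := fun a b => b ^ γ / (γ - 1) - γ * a ^ (γ - 1) * b / (γ - 1) + a ^ γ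
    with hF
  -- F a a = 0
  have hFaa : ∀ a : ℝ, 0 ≤ a → F a a = 0 := by
    intro a ha
    have h1 : a ^ (γ - 1) * a = a ^ γ := by
      have := Real.rpow_add' ha (show (γ - 1) + 1 ≠ 0 by linarith)
      rw [show (γ - 1) + 1 = γ by ring] at this
      rw [this, Real.rpow_one]
    simp only [hF]
    field_simp
    nlinarith [h1]
  -- derivative
  have hderiv : ∀ a b : ℝ, b ≠ 0 →
      HasDerivAt (F a) (γ * b ^ (γ - 1) / (γ - 1) - γ * a ^ (γ - 1) / (γ - 1)) b := by
    intro a b hb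
    have h1 : HasDerivAt (fun b : ℝ => b ^ γ / (γ - 1)) (γ * b ^ (γ - 1) / (γ - 1)) b :=
      (Real.hasDerivAt_rpow_const (Or.inl hb)).div_const _
    have h2 : HasDerivAt (fun b : ℝ => γ * a ^ (γ - 1) * b / (γ - 1))
        (γ * a ^ (γ - 1) / (γ - 1)) b := by
      have := ((hasDerivAt_id b).const_mul (γ * a ^ (γ - 1))).div_const (γ - 1)
      simpa using this
    simpa [hF] using (h1.sub h2).add_const (a ^ γ)
  have hcontFa : ∀ a : ℝ, Continuous (F a) := by
    intro a
    exact (((cont_rpow_const hγ0).div_const _).sub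
      ((continuous_const.mul continuous_id).div_const _)).add continuous_const
  -- strict monotone on Ici a
  have hmono : ∀ a : ℝ, 0 ≤ a → StrictMonoOn (F a) (Set.Ici a) := by
    intro a ha
    apply strictMonoOn_of_deriv_pos (convex_Ici a) (hcontFa a).continuousOn
    intro x hx
    rw [interior_Ici] at hx
    have hxa : a < x := hx
    have hx0 : 0 < x := lt_of_le_of_lt ha hxa
    rw [(hderiv a x (ne_of_gt hx0)).deriv]
    have : a ^ (γ - 1) < x ^ (γ - 1) := Real.rpow_lt_rpow ha hxa hγ1
    have h2 : γ * a ^ (γ - 1) / (γ - 1) < γ * x ^ (γ - 1) / (γ - 1) := by gcongr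
    linarith
  -- strict anti on Icc 0 a
  have hanti : ∀ a : ℝ, 0 ≤ a → StrictAntiOn (F a) (Set.Icc 0 a) := by
    intro a ha
    apply strictAntiOn_of_deriv_neg (convex_Icc 0 a) (hcontFa a).continuousOn
    intro x hx
    rw [interior_Icc] at hx
    have hx0 : 0 < x := hx.1
    rw [(hderiv a x (ne_of_gt hx0)).deriv]
    have : x ^ (γ - 1) < a ^ (γ - 1) := Real.rpow_lt_rpow (le_of_lt hx0) hx.2 hγ1
    have h2 : γ * x ^ (γ - 1) / (γ - 1) < γ * a ^ (γ - 1) / (γ - 1) := by gcongr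
    linarith
  -- positivity off diagonal
  have hpos : ∀ a : ℝ, 0 ≤ a → ∀ b : ℝ, 0 ≤ b → b ≠ a → 0 < F a b := by
    intro a ha b hb hne
    rcases lt_or_gt_of_ne hne with h | h
    · have := hanti a ha ⟨hb, le_of_lt h⟩ ⟨le_refl 0 |>.trans ha, le_refl a⟩ h
      rwa [hFaa a ha] at this
    · have := hmono a ha (Set.self_mem_Ici) (Set.mem_Ici.2 (le_of_lt h)) h
      rwa [hFaa a ha] at this
  -- compact set
  set K : Set (ℝ × ℝ) :=
    ((Set.Icc 0 M) ×ˢ (Set.Icc 0 (M + σ))) ∩ {p : ℝ × ℝ | σ ≤ |p.2 - p.1|} with hK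
  have hKcomp : IsCompact K := by
    apply (isCompact_Icc.prod isCompact_Icc).inter_right
    exact isClosed_le continuous_const ((continuous_snd.sub continuous_fst).abs)
  have hKne : K.Nonempty := by
    refine ⟨(0, σ), ⟨⟨⟨le_refl 0, le_of_lt hM⟩, ⟨le_of_lt hσ, by linarith⟩⟩, ?_⟩⟩
    simp [abs_of_pos hσ]
  have hcontF : ContinuousOn (fun p : ℝ × ℝ => F p.1 p.2) K := by
    apply Continuous.continuousOn
    apply Continuous.add
    · apply Continuous.sub
      · exact ((cont_rpow_const hγ0).comp continuous_snd).div_const _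
      · exact ((continuous_const.mul ((cont_rpow_const hγ1).comp continuous_fst)).mul
          continuous_snd).div_const _
    · exact (cont_rpow_const hγ0).comp continuous_fst
  obtain ⟨p₀, hp₀K, hp₀min'⟩ := hKcomp.exists_isMinOn hKne hcontF
  have hp₀min : ∀ p ∈ K, F p₀.1 p₀.2 ≤ F p.1 p.2 := fun p hp => hp₀min' hp
  have hp₀pos : 0 < F p₀.1 p₀.2 := by
    apply hpos p₀.1 hp₀K.1.1.1 p₀.2 hp₀K.1.2.1
    intro h
    have := hp₀K.2
    rw [Set.mem_setOf_eq, h, sub_self, abs_zero] at this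
    linarith
  refine ⟨F p₀.1 p₀.2, hp₀pos, ?_⟩
  intro a ha b hb hab
  by_cases hbM : b ≤ M + σ
  · exact hp₀min (a, b) ⟨⟨ha, ⟨hb, hbM⟩⟩, le_of_lt hab⟩
  · push_neg at hbM
    have haσ : a + σ ≤ M + σ := by linarith [ha.2]
    have hab' : a + σ ≤ b := by linarith [ha.2]
    have h1 : F a (a + σ) ≤ F a b :=
      (hmono a ha.1).monotoneOn (by simp [le_of_lt hσ]) (Set.mem_Ici.2 (by linarith)) hab'
    have h2 : F p₀.1 p₀.2 ≤ F a (a + σ) := by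
      apply hp₀min (a, a + σ)
      refine ⟨⟨ha, ⟨show (0:ℝ) ≤ a + σ by linarith [ha.1], haσ⟩⟩, ?_⟩
      show σ ≤ |a + σ - a|
      simp [abs_of_pos hσ]
    show F p₀.1 p₀.2 ≤ F a b
    linarith

/-- Let `γ > 1`, let `(Ω, μ)` be a measure space, let
`r : Ω → ℝ` be measurable with `0 ≤ r ≤ M`, and let `(ρ_n)` be nonnegative
measurable functions with `∫_Ω f(ρ_n|r) dμ → 0`, where
`f(ρ|r) = ρ^γ/(γ-1) − γ r^(γ-1) ρ/(γ-1) + r^γ`. Then `ρ_n → r` in measure: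
for every `σ > 0`, `μ {|ρ_n − r| > σ} → 0`. -/
theorem stmt6 {Ω : Type*} [MeasurableSpace Ω] (μ : Measure Ω)
    (γ M : ℝ) (hγ : 1 < γ) (hM : 0 < M)
    (r : Ω → ℝ) (hr_meas : Measurable r) (hr : ∀ x, r x ∈ Set.Icc 0 M)
    (ρ : ℕ → Ω → ℝ) (hρ_meas : ∀ n, Measurable (ρ n)) (hρ : ∀ n x, 0 ≤ ρ n x)
    (hconv : Tendsto
      (fun n => ∫⁻ x, ENNReal.ofReal
        (ρ n x ^ γ / (γ - 1) - γ * r x ^ (γ - 1) * ρ n x / (γ - 1) + r x ^ γ) ∂μ)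
      atTop (nhds 0)) :
    ∀ σ : ℝ, 0 < σ →
      Tendsto (fun n => μ {x | σ < |ρ n x - r x|}) atTop (nhds 0) := by
  intro σ hσ
  obtain ⟨c, hc, hkey⟩ := stmt6_key γ M σ hγ hM hσ
  set g : ℕ → Ω → ENNReal := fun n x => ENNReal.ofReal
    (ρ n x ^ γ / (γ - 1) - γ * r x ^ (γ - 1) * ρ n x / (γ - 1) + r x ^ γ) with hg
  have hgmeas : ∀ n, AEMeasurable (g n) μ := by
    intro n
    apply Measurable.aemeasurable
    apply Measurable.ennreal_ofReal
    apply Measurable.add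
    · apply Measurable.sub
      · exact (((cont_rpow_const (by linarith : (0:ℝ) < γ)).measurable.comp (hρ_meas n)).div_const _)
      · exact ((measurable_const.mul ((cont_rpow_const (by linarith : (0:ℝ) < γ - 1)).measurable.comp hr_meas)).mul (hρ_meas n)).div_const _
    · exact (cont_rpow_const (by linarith : (0:ℝ) < γ)).measurable.comp hr_meas
  have hsubset : ∀ n, {x | σ < |ρ n x - r x|} ⊆ {x | ENNReal.ofReal c ≤ g n x} := by
    intro n x hx
    have := hkey (r x) (hr x) (ρ n x) (hρ n x) hx
    exact ENNReal.ofReal_le_ofReal this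
  have hbound : ∀ n, μ {x | σ < |ρ n x - r x|} ≤ (∫⁻ x, g n x ∂μ) / ENNReal.ofReal c := by
    intro n
    have h1 : μ {x | σ < |ρ n x - r x|} ≤ μ {x | ENNReal.ofReal c ≤ g n x} :=
      measure_mono (hsubset n)
    have h2 := mul_meas_ge_le_lintegral₀ (hgmeas n) (ENNReal.ofReal c)
    have hc0 : ENNReal.ofReal c ≠ 0 := by simpa using hc
    rw [ENNReal.le_div_iff_mul_le (Or.inl hc0) (Or.inl ENNReal.ofReal_ne_top)]
    calc μ {x | σ < |ρ n x - r x|} * ENNReal.ofReal c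
        ≤ μ {x | ENNReal.ofReal c ≤ g n x} * ENNReal.ofReal c := by gcongr
      _ = ENNReal.ofReal c * μ {x | ENNReal.ofReal c ≤ g n x} := mul_comm _ _
      _ ≤ ∫⁻ x, g n x ∂μ := h2
  have htend : Tendsto (fun n => (∫⁻ x, g n x ∂μ) / ENNReal.ofReal c) atTop (nhds 0) := by
    have := ENNReal.Tendsto.mul_const hconv
      (Or.inr (by simp [ENNReal.inv_ne_top]; simpa using hc : (ENNReal.ofReal c)⁻¹ ≠ ⊤))
    simp only [zero_mul] at this
    simpa [div_eq_mul_inv, hg] using this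
  exact tendsto_of_tendsto_of_tendsto_of_le_of_le tendsto_const_nhds htend
    (fun n => zero_le) hbound
end

section
/- Let γ > 1, let Ω ⊆ ℝ^d be measurable with Lebesgue measure, let r : Ω → ℝ be continuous, bounded, nonnegative, with r ∈ L¹(Ω) ∩ L^γ(Ω), and let (ρ_n) be a sequence of nonnegative measurable functions on Ω, each in L¹(Ω) ∩ L^γ(Ω). Assume: (1) (vanishing at infinity) for every η > 0 there is R > 0 such that ∫_{Ω ∩ {|x| > R}} ρ_n dx ≤ η for all n and ∫_{Ω ∩ {|x| > R}} r dx ≤ η; (2) ∫_Ω f(ρ_n|r) dx → 0 as n → ∞. Then ‖ρ_n − r‖_{L¹(Ω)} → 0 and ‖ρ_n − r‖_{L^γ(Ω)} → 0 as n → ∞. -/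
open MeasureTheory Filter
open scoped ENNReal NNReal

namespace Stmt7Aux


noncomputable def fR (γ ρ s : ℝ) : ℝ :=
  ρ ^ γ / (γ - 1) - γ * s ^ (γ - 1) * ρ / (γ - 1) + s ^ γ

lemma hss {γ s : ℝ} (hs : 0 ≤ s) (hγ : 1 < γ) : s ^ (γ - 1) * s = s ^ γ := by
  rcases eq_or_lt_of_le hs with rfl | hs
  · rw [Real.zero_rpow (by linarith : γ - 1 ≠ 0), Real.zero_rpow (by linarith : γ ≠ 0), zero_mul]
  · rw [← Real.rpow_add_one hs.ne' (γ - 1)]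
    norm_num

lemma tangent {γ ρ s : ℝ} (hγ : 1 < γ) (hρ : 0 ≤ ρ) (hs : 0 ≤ s) :
    s ^ γ + γ * s ^ (γ - 1) * (ρ - s) ≤ ρ ^ γ := by
  rcases eq_or_lt_of_le hs with rfl | hs'
  · simp [Real.zero_rpow (show γ - 1 ≠ 0 by intro h; linarith [sub_eq_zero.mp h]),
      Real.zero_rpow (show γ ≠ 0 by intro h; linarith)]
    positivity
  · have hB := one_add_mul_self_le_rpow_one_add (s := ρ / s - 1) (by
      have : 0 ≤ ρ / s := div_nonneg hρ hs'.le
      linarith) hγ.le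
    rw [show 1 + (ρ / s - 1) = ρ / s by ring] at hB
    have hsγ : 0 < s ^ γ := Real.rpow_pos_of_pos hs' γ
    have h2 : (ρ / s) ^ γ = ρ ^ γ / s ^ γ := Real.div_rpow hρ hs'.le γ
    rw [h2] at hB
    have h3 := mul_le_mul_of_nonneg_right hB hsγ.le
    rw [div_mul_cancel₀ _ hsγ.ne'] at h3
    have h4 : s ^ (γ - 1) * s = s ^ γ := hss hs'.le hγ
    have h5 : (1 + γ * (ρ / s - 1)) * s ^ γ = s ^ γ + γ * s ^ (γ - 1) * (ρ - s) := by
      rw [← h4]; field_simp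
    linarith [h5 ▸ h3]

lemma tangent_strict {γ ρ s : ℝ} (hγ : 1 < γ) (hρ : 0 ≤ ρ) (hs : 0 ≤ s) (hne : ρ ≠ s) :
    s ^ γ + γ * s ^ (γ - 1) * (ρ - s) < ρ ^ γ := by
  rcases eq_or_lt_of_le hs with rfl | hs'
  · simp [Real.zero_rpow (show γ - 1 ≠ 0 by intro h; linarith [sub_eq_zero.mp h]),
      Real.zero_rpow (show γ ≠ 0 by intro h; linarith)]
    have : 0 < ρ := lt_of_le_of_ne hρ (Ne.symm hne)
    positivity
  · have hB := one_add_mul_self_lt_rpow_one_add (s := ρ / s - 1) (by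
      have : 0 ≤ ρ / s := div_nonneg hρ hs'.le
      linarith) (by
      intro h
      apply hne
      have h1 : ρ / s = 1 := by linarith
      rwa [div_eq_one_iff_eq hs'.ne'] at h1) hγ
    rw [show 1 + (ρ / s - 1) = ρ / s by ring] at hB
    have hsγ : 0 < s ^ γ := Real.rpow_pos_of_pos hs' γ
    have h2 : (ρ / s) ^ γ = ρ ^ γ / s ^ γ := Real.div_rpow hρ hs'.le γ
    rw [h2] at hB
    have h3 := mul_lt_mul_of_pos_right hB hsγ
    rw [div_mul_cancel₀ _ hsγ.ne'] at h3
    have h4 : s ^ (γ - 1) * s = s ^ γ := hss hs'.le hγ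
    have h5 : (1 + γ * (ρ / s - 1)) * s ^ γ = s ^ γ + γ * s ^ (γ - 1) * (ρ - s) := by
      rw [← h4]; field_simp
    linarith [h5 ▸ h3]

lemma fR_eq {γ ρ s : ℝ} (hγ : 1 < γ) (hs : 0 ≤ s) :
    fR γ ρ s = (ρ ^ γ - (s ^ γ + γ * s ^ (γ - 1) * (ρ - s))) / (γ - 1) := by
  have h4 := hss hs hγ
  rw [fR]
  have h1 : γ - 1 ≠ 0 := sub_ne_zero.mpr (by linarith)
  field_simp
  linear_combination (-γ) * h4

lemma fR_nonneg {γ ρ s : ℝ} (hγ : 1 < γ) (hρ : 0 ≤ ρ) (hs : 0 ≤ s) : 0 ≤ fR γ ρ s := by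
  rw [fR_eq hγ hs]
  exact div_nonneg (sub_nonneg.mpr (tangent hγ hρ hs)) (by linarith)

lemma fR_pos {γ ρ s : ℝ} (hγ : 1 < γ) (hρ : 0 ≤ ρ) (hs : 0 ≤ s) (hne : ρ ≠ s) :
    0 < fR γ ρ s := by
  rw [fR_eq hγ hs]
  exact div_pos (sub_pos.mpr (tangent_strict hγ hρ hs hne)) (by linarith)

/-- Young-type constant. -/
noncomputable def Cy (γ : ℝ) : ℝ := ((2 * γ) ^ (1 / (γ - 1))) ^ γ

lemma Cy_nonneg {γ : ℝ} (hγ : 1 < γ) : 0 ≤ Cy γ :=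
  Real.rpow_nonneg (Real.rpow_nonneg (by linarith) _) _

lemma young {γ ρ s : ℝ} (hγ : 1 < γ) (hρ : 0 ≤ ρ) (hs : 0 ≤ s) :
    ρ ^ γ ≤ 2 * (γ - 1) * fR γ ρ s + Cy γ * s ^ γ := by
  set K : ℝ := (2 * γ) ^ (1 / (γ - 1)) with hK
  have hKpos : 0 < K := Real.rpow_pos_of_pos (by linarith) _
  have hγ1 : (0:ℝ) < γ - 1 := by linarith
  have hfnn := fR_nonneg hγ hρ hs
  rcases le_or_gt ρ (K * s) with hcase | hcase
  · have h1 : ρ ^ γ ≤ (K * s) ^ γ := Real.rpow_le_rpow hρ hcase (by linarith)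
    have h2 : (K * s) ^ γ = Cy γ * s ^ γ := Real.mul_rpow hKpos.le hs
    nlinarith
  · have hρpos : 0 < ρ := lt_of_le_of_lt (by positivity) hcase
    have hK2 : K ^ (γ - 1) = 2 * γ := by
      rw [hK, ← Real.rpow_mul (by linarith : (0:ℝ) ≤ 2 * γ),
        one_div_mul_cancel (sub_ne_zero.mpr (by linarith : γ ≠ 1)), Real.rpow_one]
    have hs1 : s ≤ ρ / K := by
      rw [le_div_iff₀ hKpos]; nlinarith
    have hs2 : s ^ (γ - 1) ≤ (ρ / K) ^ (γ - 1) := Real.rpow_le_rpow hs hs1 (by linarith)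
    have hs3 : (ρ / K) ^ (γ - 1) = ρ ^ (γ - 1) / K ^ (γ - 1) := Real.div_rpow hρ hKpos.le _
    have h6 : s ^ (γ - 1) ≤ ρ ^ (γ - 1) / (2 * γ) := by
      rw [← hK2]; exact hs2.trans_eq hs3
    have h7 : γ * s ^ (γ - 1) * ρ ≤ γ * (ρ ^ (γ - 1) / (2 * γ)) * ρ :=
      mul_le_mul_of_nonneg_right (mul_le_mul_of_nonneg_left h6 (by linarith)) hρ
    have h8 : γ * (ρ ^ (γ - 1) / (2 * γ)) * ρ = ρ ^ γ / 2 := by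
      rw [← hss hρ hγ]; field_simp
    have e : 2 * (γ - 1) * fR γ ρ s
        = 2 * ρ ^ γ - 2 * (γ * s ^ (γ - 1) * ρ) + 2 * (γ - 1) * s ^ γ := by
      rw [fR]; field_simp
    have hsγnn : 0 ≤ s ^ γ := Real.rpow_nonneg hs γ
    have hCy := Cy_nonneg hγ
    nlinarith

lemma le_one_add_rpow {γ ρ : ℝ} (hγ : 1 < γ) (hρ : 0 ≤ ρ) : ρ ≤ 1 + ρ ^ γ := by
  rcases le_or_gt ρ 1 with h | h
  · have : 0 ≤ ρ ^ γ := Real.rpow_nonneg hρ γ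
    linarith
  · have h1 : ρ ^ (1:ℝ) ≤ ρ ^ γ := Real.rpow_le_rpow_of_exponent_le h.le hγ.le
    rw [Real.rpow_one] at h1
    linarith

lemma rpow_le_linear {γ s M : ℝ} (hγ : 1 < γ) (hs : 0 ≤ s) (hsM : s ≤ M) :
    s ^ γ ≤ M ^ (γ - 1) * s := by
  have h1 : s ^ (γ - 1) ≤ M ^ (γ - 1) := Real.rpow_le_rpow hs hsM (by linarith)
  calc s ^ γ = s ^ (γ - 1) * s := (hss hs hγ).symm
    _ ≤ M ^ (γ - 1) * s := mul_le_mul_of_nonneg_right h1 hs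

lemma abs_sub_rpow_le {γ a b : ℝ} (hγ : 1 < γ) (ha : 0 ≤ a) (hb : 0 ≤ b) :
    |a - b| ^ γ ≤ a ^ γ + b ^ γ := by
  have haγ : 0 ≤ a ^ γ := Real.rpow_nonneg ha γ
  have hbγ : 0 ≤ b ^ γ := Real.rpow_nonneg hb γ
  rcases le_total a b with h | h
  · have h1 : |a - b| = b - a := by rw [abs_sub_comm, abs_of_nonneg (by linarith)]
    have h2 : |a - b| ^ γ ≤ b ^ γ := by
      rw [h1]; exact Real.rpow_le_rpow (by linarith) (by linarith) (by linarith)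
    linarith
  · have h1 : |a - b| = a - b := abs_of_nonneg (by linarith)
    have h2 : |a - b| ^ γ ≤ a ^ γ := by
      rw [h1]; exact Real.rpow_le_rpow (by linarith) (by linarith) (by linarith)
    linarith

lemma continuous_fR {γ : ℝ} (hγ : 1 < γ) : Continuous fun p : ℝ × ℝ => fR γ p.1 p.2 := by
  have h1 : Continuous fun x : ℝ => x ^ γ := by
    rw [continuous_iff_continuousAt]
    exact fun x => Real.continuousAt_rpow_const x γ (Or.inr (by linarith))
  have h2 : Continuous fun x : ℝ => x ^ (γ - 1) := by
    rw [continuous_iff_continuousAt]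
    exact fun x => Real.continuousAt_rpow_const x (γ - 1) (Or.inr (by linarith))
  unfold fR
  exact (((h1.comp continuous_fst).div_const _).sub
    (((continuous_const.mul (h2.comp continuous_snd)).mul continuous_fst).div_const _)).add
    (h1.comp continuous_snd)

lemma exists_delta {γ : ℝ} (hγ : 1 < γ) (M : ℝ) (hM : 0 ≤ M) {ε : ℝ} (hε : 0 < ε) :
    ∃ δ : ℝ, 0 < δ ∧ ∀ ρ s : ℝ, 0 ≤ ρ → 0 ≤ s → s ≤ M → ε ≤ |ρ - s| → δ ≤ fR γ ρ s := by
  have hγ1 : (0:ℝ) < γ - 1 := by linarith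
  have hCy := Cy_nonneg hγ
  have hMγ : (0:ℝ) ≤ M ^ γ := Real.rpow_nonneg hM γ
  have hXnn : (0:ℝ) ≤ 2 * (γ - 1) + Cy γ * M ^ γ := by nlinarith
  set T : ℝ := max (M + ε) ((2 * (γ - 1) + Cy γ * M ^ γ) ^ (1/γ)) with hT
  set Kset : Set (ℝ × ℝ) := (Set.Icc 0 T ×ˢ Set.Icc 0 M) ∩ {p : ℝ × ℝ | ε ≤ |p.1 - p.2|}
    with hKset
  have hclosed : IsClosed {p : ℝ × ℝ | ε ≤ |p.1 - p.2|} :=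
    isClosed_le continuous_const (continuous_fst.sub continuous_snd).abs
  have hcomp : IsCompact Kset :=
    (isCompact_Icc.prod isCompact_Icc).inter_right hclosed
  have hne : Kset.Nonempty := by
    refine ⟨(M + ε, M), ⟨⟨⟨by positivity, le_max_left _ _⟩, ⟨hM, le_rfl⟩⟩, ?_⟩⟩
    simp only [Set.mem_setOf_eq]
    rw [show M + ε - M = ε by ring, abs_of_pos hε]
  obtain ⟨p₀, hp₀, hmin⟩ := hcomp.exists_isMinOn hne (continuous_fR hγ).continuousOn
  have hp₀ne : p₀.1 ≠ p₀.2 := by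
    intro h
    have := hp₀.2
    simp only [Set.mem_setOf_eq, h, sub_self, abs_zero] at this
    linarith
  have hδ₀ : 0 < fR γ p₀.1 p₀.2 := fR_pos hγ hp₀.1.1.1 hp₀.1.2.1 hp₀ne
  refine ⟨min (fR γ p₀.1 p₀.2) 1, lt_min hδ₀ one_pos, ?_⟩
  intro ρ s hρ hs hsM hεd
  rcases le_or_gt ρ T with hcase | hcase
  · have := hmin (Set.mem_inter (Set.mk_mem_prod ⟨hρ, hcase⟩ ⟨hs, hsM⟩) hεd)
    exact le_trans (min_le_left _ _) this
  · have h1 : (2 * (γ - 1) + Cy γ * M ^ γ) ^ (1/γ) ≤ ρ :=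
      le_trans (le_max_right _ _) hcase.le
    have h2 : ((2 * (γ - 1) + Cy γ * M ^ γ) ^ (1/γ)) ^ γ ≤ ρ ^ γ :=
      Real.rpow_le_rpow (Real.rpow_nonneg hXnn _) h1 (by linarith)
    have h3 : ((2 * (γ - 1) + Cy γ * M ^ γ) ^ (1/γ)) ^ γ = 2 * (γ - 1) + Cy γ * M ^ γ := by
      rw [← Real.rpow_mul hXnn, one_div_mul_cancel (by linarith : γ ≠ 0), Real.rpow_one]
    have h4 := young hγ hρ hs
    have h5 : Cy γ * s ^ γ ≤ Cy γ * M ^ γ :=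
      mul_le_mul_of_nonneg_left (Real.rpow_le_rpow hs hsM (by linarith)) hCy
    have h7 : 1 ≤ fR γ ρ s := by nlinarith
    exact le_trans (min_le_right _ _) h7


lemma key {d : ℕ}
    (Ω : Set (EuclideanSpace ℝ (Fin d))) (hΩ : MeasurableSet Ω)
    (r : EuclideanSpace ℝ (Fin d) → ℝ) (ρ : ℕ → EuclideanSpace ℝ (Fin d) → ℝ)
    (φ g : ℕ → EuclideanSpace ℝ (Fin d) → ℝ)
    (hr_nonneg : ∀ x ∈ Ω, 0 ≤ r x)
    (hρ_nonneg : ∀ n, ∀ x ∈ Ω, 0 ≤ ρ n x)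
    (hr_int : Integrable r (volume.restrict Ω))
    (hρ_int : ∀ n, Integrable (ρ n) (volume.restrict Ω))
    (hρ_aemeas : ∀ n, AEMeasurable (ρ n) (volume.restrict Ω))
    (hφ_nonneg : ∀ n, ∀ x ∈ Ω, 0 ≤ φ n x)
    (hφ_aemeas : ∀ n, AEMeasurable (φ n) (volume.restrict Ω))
    (h_tight : ∀ η : ℝ, 0 < η → ∃ R : ℝ, 0 < R ∧
      (∀ n, ∫ x in Ω ∩ {x | R < ‖x‖}, ρ n x ≤ η) ∧
      ∫ x in Ω ∩ {x | R < ‖x‖}, r x ≤ η)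
    (h_conv : Tendsto (fun n => ∫⁻ x in Ω, ENNReal.ofReal (φ n x)) atTop (nhds 0))
    (hA : ∀ ε : ℝ, 0 < ε → ∃ K : ℝ, 0 ≤ K ∧ ∀ n, ∀ x ∈ Ω, g n x ≤ ε + K * φ n x)
    (hB : ∃ c₁ c₂ c₃ : ℝ, 0 ≤ c₁ ∧ 0 ≤ c₂ ∧ 0 ≤ c₃ ∧
      ∀ n, ∀ x ∈ Ω, g n x ≤ c₁ * φ n x + c₂ * ρ n x + c₃ * r x) :
    Tendsto (fun n => ∫⁻ x in Ω, ENNReal.ofReal (g n x)) atTop (nhds 0) := by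
  obtain ⟨c₁, c₂, c₃, hc₁, hc₂, hc₃, hBineq⟩ := hB
  rw [ENNReal.tendsto_atTop_zero]
  intro ε hε
  set εr : ℝ≥0∞ := min ε 1 with hεr
  have hεr_pos : 0 < εr := lt_min hε zero_lt_one
  have hεr_ne_top : εr ≠ ⊤ := ((min_le_right _ _).trans_lt (by norm_num)).ne
  set E : ℝ := εr.toReal with hE_def
  have hE : 0 < E := ENNReal.toReal_pos hεr_pos.ne' hεr_ne_top
  have hq : ENNReal.ofReal (E / 4) = εr / 4 := by
    rw [ENNReal.ofReal_div_of_pos (by norm_num), ENNReal.ofReal_toReal hεr_ne_top]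
    norm_num
  -- tightness
  set η : ℝ := E / (4 * (c₂ + c₃ + 1)) with hη_def
  have hη_pos : 0 < η := by positivity
  obtain ⟨R, hRpos, hρ_tail, hr_tail⟩ := h_tight η hη_pos
  set B : Set (EuclideanSpace ℝ (Fin d)) := Ω ∩ {x | R < ‖x‖} with hB_def
  set A : Set (EuclideanSpace ℝ (Fin d)) := Ω ∩ Metric.closedBall 0 R with hA_def
  have hAmeas : MeasurableSet A := hΩ.inter measurableSet_closedBall
  have hBmeas : MeasurableSet B :=
    hΩ.inter (measurableSet_lt measurable_const measurable_norm)
  have hAΩ : A ⊆ Ω := Set.inter_subset_left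
  have hBΩ : B ⊆ Ω := Set.inter_subset_left
  have hsplit : Ω = A ∪ B := by
    ext x
    constructor
    · intro hx
      rcases le_or_gt (‖x‖) R with h | h
      · exact Or.inl ⟨hx, by simpa [Metric.mem_closedBall, dist_zero_right] using h⟩
      · exact Or.inr ⟨hx, h⟩
    · rintro (h | h) <;> exact h.1
  have hdisj : Disjoint A B := by
    rw [Set.disjoint_left]
    rintro x ⟨hx1, hx2⟩ ⟨hx3, hx4⟩
    rw [Metric.mem_closedBall, dist_zero_right] at hx2
    exact absurd hx4 (not_lt.mpr hx2)
  set V : ℝ≥0∞ := volume A with hV_def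
  have hV : V ≠ ⊤ :=
    ((measure_mono Set.inter_subset_right).trans_lt measure_closedBall_lt_top).ne
  set ε₁ : ℝ := E / (4 * (V.toReal + 1)) with hε₁_def
  have hVtnn : 0 ≤ V.toReal := ENNReal.toReal_nonneg
  have hε₁_pos : 0 < ε₁ := by positivity
  obtain ⟨K, hK, hAineq⟩ := hA ε₁ hε₁_pos
  set D : ℝ≥0∞ := ENNReal.ofReal K + ENNReal.ofReal c₁ + 1 with hD_def
  have hD_ne_top : D ≠ ⊤ := by
    simp [hD_def]
  have hD_ne_zero : D ≠ 0 := by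
    simp [hD_def]
  set εe : ℝ≥0∞ := (εr / 4) / D with hεe_def
  have hεe_pos : 0 < εe := ENNReal.div_pos (ENNReal.div_pos hεr_pos.ne' (by norm_num)).ne'
    hD_ne_top
  obtain ⟨N, hN⟩ := ENNReal.tendsto_atTop_zero.mp h_conv εe hεe_pos
  refine ⟨N, fun n hn => ?_⟩
  set e : ℝ≥0∞ := ∫⁻ x in Ω, ENNReal.ofReal (φ n x) with he_def
  have he : e ≤ εe := hN n hn
  -- split the integral
  have hsplitint : ∫⁻ x in Ω, ENNReal.ofReal (g n x)
      = (∫⁻ x in A, ENNReal.ofReal (g n x)) + ∫⁻ x in B, ENNReal.ofReal (g n x) := by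
    rw [hsplit, lintegral_union hBmeas hdisj]
  -- A part
  have hφA : ∫⁻ x in A, ENNReal.ofReal (φ n x) ≤ e := lintegral_mono_set hAΩ
  have hφB : ∫⁻ x in B, ENNReal.ofReal (φ n x) ≤ e := lintegral_mono_set hBΩ
  have estA : ∫⁻ x in A, ENNReal.ofReal (g n x)
      ≤ ENNReal.ofReal ε₁ * V + ENNReal.ofReal K * e := by
    have step1 : ∫⁻ x in A, ENNReal.ofReal (g n x)
        ≤ ∫⁻ x in A, (ENNReal.ofReal ε₁ + ENNReal.ofReal K * ENNReal.ofReal (φ n x)) := by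
      refine lintegral_mono_ae ?_
      filter_upwards [ae_restrict_mem hAmeas] with x hx
      have hxΩ := hAΩ hx
      calc ENNReal.ofReal (g n x) ≤ ENNReal.ofReal (ε₁ + K * φ n x) :=
            ENNReal.ofReal_le_ofReal (hAineq n x hxΩ)
        _ ≤ ENNReal.ofReal ε₁ + ENNReal.ofReal (K * φ n x) := ENNReal.ofReal_add_le
        _ = ENNReal.ofReal ε₁ + ENNReal.ofReal K * ENNReal.ofReal (φ n x) := by
            rw [ENNReal.ofReal_mul hK]
    have step2 : ∫⁻ x in A, (ENNReal.ofReal ε₁ + ENNReal.ofReal K * ENNReal.ofReal (φ n x))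
        = ENNReal.ofReal ε₁ * V + ENNReal.ofReal K * ∫⁻ x in A, ENNReal.ofReal (φ n x) := by
      rw [lintegral_add_left measurable_const, setLIntegral_const,
        lintegral_const_mul' _ _ ENNReal.ofReal_ne_top]
    exact step1.trans (step2.le.trans (by
      exact add_le_add le_rfl (mul_le_mul_right hφA _)))
  -- B part
  have hρB : ∫⁻ x in B, ENNReal.ofReal (ρ n x) ≤ ENNReal.ofReal η := by
    rw [← ofReal_integral_eq_lintegral_ofReal
      ((hρ_int n).mono_measure (Measure.restrict_mono hBΩ le_rfl))
      ((ae_restrict_mem hBmeas).mono fun x hx => hρ_nonneg n x (hBΩ hx))]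
    exact ENNReal.ofReal_le_ofReal (hρ_tail n)
  have hrB : ∫⁻ x in B, ENNReal.ofReal (r x) ≤ ENNReal.ofReal η := by
    rw [← ofReal_integral_eq_lintegral_ofReal
      (hr_int.mono_measure (Measure.restrict_mono hBΩ le_rfl))
      ((ae_restrict_mem hBmeas).mono fun x hx => hr_nonneg x (hBΩ hx))]
    exact ENNReal.ofReal_le_ofReal hr_tail
  have estB : ∫⁻ x in B, ENNReal.ofReal (g n x)
      ≤ ENNReal.ofReal c₁ * e + (ENNReal.ofReal c₂ * ENNReal.ofReal η
        + ENNReal.ofReal c₃ * ENNReal.ofReal η) := by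
    have step1 : ∫⁻ x in B, ENNReal.ofReal (g n x)
        ≤ ∫⁻ x in B, (ENNReal.ofReal c₁ * ENNReal.ofReal (φ n x)
          + (ENNReal.ofReal c₂ * ENNReal.ofReal (ρ n x)
            + ENNReal.ofReal c₃ * ENNReal.ofReal (r x))) := by
      refine lintegral_mono_ae ?_
      filter_upwards [ae_restrict_mem hBmeas] with x hx
      have hxΩ := hBΩ hx
      calc ENNReal.ofReal (g n x)
          ≤ ENNReal.ofReal (c₁ * φ n x + c₂ * ρ n x + c₃ * r x) :=
            ENNReal.ofReal_le_ofReal (hBineq n x hxΩ)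
        _ ≤ ENNReal.ofReal (c₁ * φ n x + c₂ * ρ n x) + ENNReal.ofReal (c₃ * r x) :=
            ENNReal.ofReal_add_le
        _ ≤ ENNReal.ofReal (c₁ * φ n x) + ENNReal.ofReal (c₂ * ρ n x)
            + ENNReal.ofReal (c₃ * r x) :=
            add_le_add_left ENNReal.ofReal_add_le _
        _ = ENNReal.ofReal c₁ * ENNReal.ofReal (φ n x)
            + (ENNReal.ofReal c₂ * ENNReal.ofReal (ρ n x)
              + ENNReal.ofReal c₃ * ENNReal.ofReal (r x)) := by
            rw [ENNReal.ofReal_mul hc₁, ENNReal.ofReal_mul hc₂, ENNReal.ofReal_mul hc₃]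
            ring
    have hμB : Measure.restrict volume B ≤ Measure.restrict volume Ω :=
      Measure.restrict_mono hBΩ le_rfl
    have hφm : AEMeasurable (fun x => ENNReal.ofReal c₁ * ENNReal.ofReal (φ n x))
        (volume.restrict B) :=
      (ENNReal.measurable_ofReal.comp_aemeasurable
        ((hφ_aemeas n).mono_measure hμB)).const_mul _
    have hρm : AEMeasurable (fun x => ENNReal.ofReal c₂ * ENNReal.ofReal (ρ n x))
        (volume.restrict B) :=
      (ENNReal.measurable_ofReal.comp_aemeasurable
        ((hρ_aemeas n).mono_measure hμB)).const_mul _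
    have step2 : ∫⁻ x in B, (ENNReal.ofReal c₁ * ENNReal.ofReal (φ n x)
          + (ENNReal.ofReal c₂ * ENNReal.ofReal (ρ n x)
            + ENNReal.ofReal c₃ * ENNReal.ofReal (r x)))
        = ENNReal.ofReal c₁ * (∫⁻ x in B, ENNReal.ofReal (φ n x))
          + (ENNReal.ofReal c₂ * (∫⁻ x in B, ENNReal.ofReal (ρ n x))
            + ENNReal.ofReal c₃ * ∫⁻ x in B, ENNReal.ofReal (r x)) := by
      rw [lintegral_add_left' hφm, lintegral_add_left' hρm,
        lintegral_const_mul' _ _ ENNReal.ofReal_ne_top,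
        lintegral_const_mul' _ _ ENNReal.ofReal_ne_top,
        lintegral_const_mul' _ _ ENNReal.ofReal_ne_top]
    refine step1.trans (step2.le.trans ?_)
    exact add_le_add (mul_le_mul_right hφB _)
      (add_le_add (mul_le_mul_right hρB _) (mul_le_mul_right hrB _))
  -- combine
  have q1 : ENNReal.ofReal ε₁ * V ≤ εr / 4 := by
    rw [← ENNReal.ofReal_toReal hV, ← ENNReal.ofReal_mul hε₁_pos.le, ← hq]
    apply ENNReal.ofReal_le_ofReal
    rw [hε₁_def, div_mul_eq_mul_div, div_le_div_iff₀ (by positivity) (by norm_num)]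
    nlinarith
  have q2 : ENNReal.ofReal K * e + ENNReal.ofReal c₁ * e ≤ εr / 4 := by
    have h1 : ENNReal.ofReal K * e + ENNReal.ofReal c₁ * e ≤ D * εe := by
      calc ENNReal.ofReal K * e + ENNReal.ofReal c₁ * e
          = (ENNReal.ofReal K + ENNReal.ofReal c₁) * e := by ring
        _ ≤ D * εe := mul_le_mul' (by rw [hD_def]; exact le_self_add) he
    exact h1.trans (by rw [hεe_def]; exact ENNReal.mul_div_le)
  have q3 : ENNReal.ofReal c₂ * ENNReal.ofReal η + ENNReal.ofReal c₃ * ENNReal.ofReal η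
      ≤ εr / 4 := by
    rw [← ENNReal.ofReal_mul hc₂, ← ENNReal.ofReal_mul hc₃, ← hq,
      ← ENNReal.ofReal_add (by positivity) (by positivity)]
    apply ENNReal.ofReal_le_ofReal
    rw [hη_def]
    rw [show c₂ * (E / (4 * (c₂ + c₃ + 1))) + c₃ * (E / (4 * (c₂ + c₃ + 1)))
      = ((c₂ + c₃) * E) / (4 * (c₂ + c₃ + 1)) by ring]
    rw [div_le_div_iff₀ (by positivity) (by norm_num)]
    nlinarith
  have total : ∫⁻ x in Ω, ENNReal.ofReal (g n x) ≤ εr / 4 + εr / 4 + εr / 4 := by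
    rw [hsplitint]
    calc (∫⁻ x in A, ENNReal.ofReal (g n x)) + ∫⁻ x in B, ENNReal.ofReal (g n x)
        ≤ (ENNReal.ofReal ε₁ * V + ENNReal.ofReal K * e)
          + (ENNReal.ofReal c₁ * e + (ENNReal.ofReal c₂ * ENNReal.ofReal η
            + ENNReal.ofReal c₃ * ENNReal.ofReal η)) := add_le_add estA estB
      _ = ENNReal.ofReal ε₁ * V + (ENNReal.ofReal K * e + ENNReal.ofReal c₁ * e)
          + (ENNReal.ofReal c₂ * ENNReal.ofReal η + ENNReal.ofReal c₃ * ENNReal.ofReal η) := by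
          ring
      _ ≤ εr / 4 + εr / 4 + εr / 4 := add_le_add (add_le_add q1 q2) q3
  have hfinal : εr / 4 + εr / 4 + εr / 4 ≤ εr := by
    have h1 : εr / 4 + εr / 4 + εr / 4 = 3 * (εr / 4) := by ring
    have h2 : (3 : ℝ≥0∞) * (εr / 4) ≤ 4 * (εr / 4) := mul_le_mul_left (by norm_num) _
    have h3 : (4 : ℝ≥0∞) * (εr / 4) = εr := ENNReal.mul_div_cancel (by norm_num) (by norm_num)
    calc εr / 4 + εr / 4 + εr / 4 = 3 * (εr / 4) := h1
      _ ≤ 4 * (εr / 4) := h2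
      _ = εr := h3
  exact total.trans (hfinal.trans (min_le_left _ _))

end Stmt7Aux

/-- Lemma 3.4 of the paper. Let `γ > 1`, `Ω ⊆ ℝ^d` measurable,
`r : Ω → ℝ` continuous, bounded, nonnegative, in `L¹ ∩ L^γ(Ω)`, and `(ρ_n)` nonnegative
measurable functions in `L¹ ∩ L^γ(Ω)`. If (1) the masses of `ρ_n` and `r` vanish
uniformly at infinity, and (2) `∫_Ω f(ρ_n|r) dx → 0`, then `ρ_n → r` in `L¹(Ω)`
and in `L^γ(Ω)`. Here `f(ρ|r) = ρ^γ/(γ-1) − γ r^(γ-1) ρ/(γ-1) + r^γ`. -/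
theorem stmt7 (d : ℕ) (γ : ℝ) (hγ : 1 < γ)
    (Ω : Set (EuclideanSpace ℝ (Fin d))) (hΩ : MeasurableSet Ω)
    (r : EuclideanSpace ℝ (Fin d) → ℝ)
    (hr_cont : ContinuousOn r Ω)
    (hr_bdd : ∃ M : ℝ, ∀ x ∈ Ω, r x ≤ M)
    (hr_nonneg : ∀ x ∈ Ω, 0 ≤ r x)
    (hr_L1 : MemLp r 1 (volume.restrict Ω))
    (hr_Lγ : MemLp r (ENNReal.ofReal γ) (volume.restrict Ω))
    (ρ : ℕ → EuclideanSpace ℝ (Fin d) → ℝ)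
    (hρ_meas : ∀ n, Measurable (ρ n))
    (hρ_nonneg : ∀ n, ∀ x ∈ Ω, 0 ≤ ρ n x)
    (hρ_L1 : ∀ n, MemLp (ρ n) 1 (volume.restrict Ω))
    (hρ_Lγ : ∀ n, MemLp (ρ n) (ENNReal.ofReal γ) (volume.restrict Ω))
    (h_tight : ∀ η : ℝ, 0 < η → ∃ R : ℝ, 0 < R ∧
      (∀ n, ∫ x in Ω ∩ {x | R < ‖x‖}, ρ n x ≤ η) ∧
      ∫ x in Ω ∩ {x | R < ‖x‖}, r x ≤ η)
    (h_conv : Tendsto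
      (fun n => ∫⁻ x in Ω, ENNReal.ofReal
        (ρ n x ^ γ / (γ - 1) - γ * r x ^ (γ - 1) * ρ n x / (γ - 1) + r x ^ γ))
      atTop (nhds 0)) :
    Tendsto (fun n => eLpNorm (fun x => ρ n x - r x) 1 (volume.restrict Ω))
        atTop (nhds 0) ∧
    Tendsto (fun n => eLpNorm (fun x => ρ n x - r x) (ENNReal.ofReal γ) (volume.restrict Ω))
        atTop (nhds 0) := by
  classical
  obtain ⟨M₀, hM₀⟩ := hr_bdd
  set M : ℝ := max M₀ 0 with hM_def
  have hM : 0 ≤ M := le_max_right _ _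
  have hrM : ∀ x ∈ Ω, r x ≤ M := fun x hx => (hM₀ x hx).trans (le_max_left _ _)
  have hγ0 : (0:ℝ) < γ := by linarith
  have hγ1 : (0:ℝ) < γ - 1 := by linarith
  have hCy := Stmt7Aux.Cy_nonneg hγ
  have hMγ : (0:ℝ) ≤ M ^ γ := Real.rpow_nonneg hM γ
  have hMγ1 : (0:ℝ) ≤ M ^ (γ - 1) := Real.rpow_nonneg hM _
  have hr_int : Integrable r (volume.restrict Ω) := memLp_one_iff_integrable.mp hr_L1
  have hρ_int : ∀ n, Integrable (ρ n) (volume.restrict Ω) :=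
    fun n => memLp_one_iff_integrable.mp (hρ_L1 n)
  have hρ_aemeas : ∀ n, AEMeasurable (ρ n) (volume.restrict Ω) :=
    fun n => (hρ_meas n).aemeasurable
  have hr_aemeas : AEMeasurable r (volume.restrict Ω) :=
    hr_L1.aestronglyMeasurable.aemeasurable
  have hcont1 : Continuous fun t : ℝ => t ^ γ := by
    rw [continuous_iff_continuousAt]
    exact fun x => Real.continuousAt_rpow_const x γ (Or.inr hγ0.le)
  have hcont2 : Continuous fun t : ℝ => t ^ (γ - 1) := by
    rw [continuous_iff_continuousAt]
    exact fun x => Real.continuousAt_rpow_const x (γ - 1) (Or.inr (by linarith))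
  have hφ_nonneg : ∀ n, ∀ x ∈ Ω,
      0 ≤ ρ n x ^ γ / (γ - 1) - γ * r x ^ (γ - 1) * ρ n x / (γ - 1) + r x ^ γ :=
    fun n x hx => Stmt7Aux.fR_nonneg hγ (hρ_nonneg n x hx) (hr_nonneg x hx)
  have hφ_aemeas : ∀ n, AEMeasurable
      (fun x => ρ n x ^ γ / (γ - 1) - γ * r x ^ (γ - 1) * ρ n x / (γ - 1) + r x ^ γ)
      (volume.restrict Ω) := by
    intro n
    exact (((hcont1.measurable.comp_aemeasurable (hρ_aemeas n)).div_const _).sub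
      (((aemeasurable_const.mul (hcont2.measurable.comp_aemeasurable hr_aemeas)).mul
        (hρ_aemeas n)).div_const _)).add (hcont1.measurable.comp_aemeasurable hr_aemeas)
  constructor
  · -- L¹ convergence
    have hkey := Stmt7Aux.key Ω hΩ r ρ
      (fun n x => ρ n x ^ γ / (γ - 1) - γ * r x ^ (γ - 1) * ρ n x / (γ - 1) + r x ^ γ)
      (fun n x => |ρ n x - r x|)
      hr_nonneg hρ_nonneg hr_int hρ_int hρ_aemeas hφ_nonneg hφ_aemeas h_tight h_conv
      (by
        intro ε hε
        obtain ⟨δ, hδ, hδf⟩ := Stmt7Aux.exists_delta hγ M hM hε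
        have hNnn : (0:ℝ) ≤ 1 + M + Stmt7Aux.Cy γ * M ^ γ := by nlinarith
        refine ⟨(1 + M + Stmt7Aux.Cy γ * M ^ γ) / δ + 2 * (γ - 1),
          add_nonneg (div_nonneg hNnn hδ.le) (by linarith), ?_⟩
        intro n x hx
        have ha := hρ_nonneg n x hx
        have hs := hr_nonneg x hx
        have hsM := hrM x hx
        have hfnn := Stmt7Aux.fR_nonneg hγ ha hs
        rcases le_or_gt (|ρ n x - r x|) ε with h | h
        · have hKnn : (0:ℝ) ≤ (1 + M + Stmt7Aux.Cy γ * M ^ γ) / δ + 2 * (γ - 1) :=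
            add_nonneg (div_nonneg hNnn hδ.le) (by linarith)
          have := mul_nonneg hKnn hfnn
          simp only [Stmt7Aux.fR] at this
          linarith
        · have hδle := hδf (ρ n x) (r x) ha hs hsM h.le
          have h5 := Stmt7Aux.le_one_add_rpow hγ ha
          have h6 := Stmt7Aux.young hγ ha hs
          have h7 : r x ^ γ ≤ M ^ γ := Real.rpow_le_rpow hs hsM hγ0.le
          have h7' := mul_le_mul_of_nonneg_left h7 hCy
          have h8 : |ρ n x - r x| ≤ ρ n x + r x := by
            rw [abs_sub_le_iff]; constructor <;> linarith
          have h9 : (1 + M + Stmt7Aux.Cy γ * M ^ γ)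
              ≤ ((1 + M + Stmt7Aux.Cy γ * M ^ γ) / δ) * Stmt7Aux.fR γ (ρ n x) (r x) := by
            calc (1 + M + Stmt7Aux.Cy γ * M ^ γ)
                = ((1 + M + Stmt7Aux.Cy γ * M ^ γ) / δ) * δ := by
                  rw [div_mul_cancel₀ _ hδ.ne']
              _ ≤ _ := mul_le_mul_of_nonneg_left hδle (div_nonneg hNnn hδ.le)
          have hexp : ((1 + M + Stmt7Aux.Cy γ * M ^ γ) / δ + 2 * (γ - 1))
                * Stmt7Aux.fR γ (ρ n x) (r x)
              = ((1 + M + Stmt7Aux.Cy γ * M ^ γ) / δ) * Stmt7Aux.fR γ (ρ n x) (r x)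
                + 2 * (γ - 1) * Stmt7Aux.fR γ (ρ n x) (r x) := by ring
          simp only [Stmt7Aux.fR] at h6 h9 hexp
          linarith)
      ⟨0, 1, 1, le_rfl, zero_le_one, zero_le_one, by
        intro n x hx
        have ha := hρ_nonneg n x hx
        have hs := hr_nonneg x hx
        have h8 : |ρ n x - r x| ≤ ρ n x + r x := by
          rw [abs_sub_le_iff]; constructor <;> linarith
        linarith⟩
    have heq : (fun n => eLpNorm (fun x => ρ n x - r x) 1 (volume.restrict Ω))
        = fun n => ∫⁻ x in Ω, ENNReal.ofReal |ρ n x - r x| := by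
      funext n
      rw [eLpNorm_one_eq_lintegral_enorm]
      exact lintegral_congr fun x => Real.enorm_eq_ofReal_abs _
    rw [heq]
    exact hkey
  · -- Lγ convergence
    have hkey := Stmt7Aux.key Ω hΩ r ρ
      (fun n x => ρ n x ^ γ / (γ - 1) - γ * r x ^ (γ - 1) * ρ n x / (γ - 1) + r x ^ γ)
      (fun n x => |ρ n x - r x| ^ γ)
      hr_nonneg hρ_nonneg hr_int hρ_int hρ_aemeas hφ_nonneg hφ_aemeas h_tight h_conv
      (by
        intro ε hε
        have hε2 : (0:ℝ) < ε ^ (1/γ) := Real.rpow_pos_of_pos hε _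
        obtain ⟨δ, hδ, hδf⟩ := Stmt7Aux.exists_delta hγ M hM hε2
        have hNnn : (0:ℝ) ≤ (Stmt7Aux.Cy γ + 1) * M ^ γ := by nlinarith
        refine ⟨2 * (γ - 1) + (Stmt7Aux.Cy γ + 1) * M ^ γ / δ,
          add_nonneg (by linarith) (div_nonneg hNnn hδ.le), ?_⟩
        intro n x hx
        have ha := hρ_nonneg n x hx
        have hs := hr_nonneg x hx
        have hsM := hrM x hx
        have hfnn := Stmt7Aux.fR_nonneg hγ ha hs
        rcases le_or_gt (|ρ n x - r x|) (ε ^ (1/γ)) with h | h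
        · have h1 : |ρ n x - r x| ^ γ ≤ (ε ^ (1/γ)) ^ γ :=
            Real.rpow_le_rpow (abs_nonneg _) h hγ0.le
          have h2 : (ε ^ (1/γ)) ^ γ = ε := by
            rw [← Real.rpow_mul hε.le, one_div_mul_cancel hγ0.ne', Real.rpow_one]
          have hKnn : (0:ℝ) ≤ 2 * (γ - 1) + (Stmt7Aux.Cy γ + 1) * M ^ γ / δ :=
            add_nonneg (by linarith) (div_nonneg hNnn hδ.le)
          have := mul_nonneg hKnn hfnn
          simp only [Stmt7Aux.fR] at this
          linarith
        · have hδle := hδf (ρ n x) (r x) ha hs hsM h.le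
          have h3 := Stmt7Aux.abs_sub_rpow_le hγ ha hs
          have h4 := Stmt7Aux.young hγ ha hs
          have h7 : r x ^ γ ≤ M ^ γ := Real.rpow_le_rpow hs hsM hγ0.le
          have h7' := mul_le_mul_of_nonneg_left h7 hCy
          have h9 : (Stmt7Aux.Cy γ + 1) * M ^ γ
              ≤ ((Stmt7Aux.Cy γ + 1) * M ^ γ / δ) * Stmt7Aux.fR γ (ρ n x) (r x) := by
            calc (Stmt7Aux.Cy γ + 1) * M ^ γ
                = ((Stmt7Aux.Cy γ + 1) * M ^ γ / δ) * δ := by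
                  rw [div_mul_cancel₀ _ hδ.ne']
              _ ≤ _ := mul_le_mul_of_nonneg_left hδle (div_nonneg hNnn hδ.le)
          have hexp : (2 * (γ - 1) + (Stmt7Aux.Cy γ + 1) * M ^ γ / δ)
                * Stmt7Aux.fR γ (ρ n x) (r x)
              = 2 * (γ - 1) * Stmt7Aux.fR γ (ρ n x) (r x)
                + ((Stmt7Aux.Cy γ + 1) * M ^ γ / δ) * Stmt7Aux.fR γ (ρ n x) (r x) := by ring
          simp only [Stmt7Aux.fR] at h4 h9 hexp
          linarith [hε.le])
      ⟨2 * (γ - 1), 0, (Stmt7Aux.Cy γ + 1) * M ^ (γ - 1),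
        by linarith, le_rfl, by nlinarith, by
        intro n x hx
        have ha := hρ_nonneg n x hx
        have hs := hr_nonneg x hx
        have hsM := hrM x hx
        have h3 := Stmt7Aux.abs_sub_rpow_le hγ ha hs
        have h4 := Stmt7Aux.young hγ ha hs
        have h5 := Stmt7Aux.rpow_le_linear hγ hs hsM
        have h5' := mul_le_mul_of_nonneg_left h5 hCy
        simp only [Stmt7Aux.fR] at h4
        linarith⟩
    have hp0 : (ENNReal.ofReal γ) ≠ 0 := by
      simp only [Ne, ENNReal.ofReal_eq_zero, not_le]; exact hγ0
    have hpt : (ENNReal.ofReal γ) ≠ ⊤ := ENNReal.ofReal_ne_top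
    have heq : (fun n => eLpNorm (fun x => ρ n x - r x) (ENNReal.ofReal γ) (volume.restrict Ω))
        = fun n => (∫⁻ x in Ω, ENNReal.ofReal (|ρ n x - r x| ^ γ)) ^ (1/γ) := by
      funext n
      rw [eLpNorm_eq_lintegral_rpow_enorm_toReal hp0 hpt, ENNReal.toReal_ofReal hγ0.le]
      congr 1
      exact lintegral_congr fun x => by
        rw [Real.enorm_eq_ofReal_abs, ENNReal.ofReal_rpow_of_nonneg (abs_nonneg _) hγ0.le]
    rw [heq, ENNReal.tendsto_atTop_zero]
    intro ε hε
    have hεγ : (0:ℝ≥0∞) < ε ^ γ := by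
      rw [pos_iff_ne_zero, Ne, ENNReal.rpow_eq_zero_iff]
      rintro (⟨h0, -⟩ | ⟨-, hneg⟩)
      · exact hε.ne' h0
      · linarith
    obtain ⟨N, hN⟩ := ENNReal.tendsto_atTop_zero.mp hkey (ε ^ γ) hεγ
    refine ⟨N, fun n hn => ?_⟩
    calc (∫⁻ x in Ω, ENNReal.ofReal (|ρ n x - r x| ^ γ)) ^ (1/γ)
        ≤ (ε ^ γ) ^ (1/γ) := ENNReal.rpow_le_rpow (hN n hn) (by positivity)
      _ = ε := by
          rw [← ENNReal.rpow_mul, mul_one_div_cancel hγ0.ne', ENNReal.rpow_one]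
end

section
/- Let U ⊆ ℝ^d be open, let ρ : U → ℝ be twice continuously differentiable with ρ(x) > 0 for all x ∈ U, and let k : (0, ∞) → (0, ∞) be continuously differentiable. Define the auxiliary velocity field v(x) = √(k(ρ(x))/ρ(x)) ∇ρ(x). Then for every x ∈ U: div(k(ρ)∇ρ)(x) = √(ρ(x) k(ρ(x))) · (div v)(x) + (1/2)|v(x)|² + (1/2) k'(ρ(x)) |∇ρ(x)|². -/
open Set

/-- Partial derivative `∂ᵢ f` of a scalar function on `ℝ^d` (Euclidean space). -/
noncomputable def pder (d : ℕ) (i : Fin d) (f : EuclideanSpace ℝ (Fin d) → ℝ)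
    (x : EuclideanSpace ℝ (Fin d)) : ℝ :=
  fderiv ℝ f x (EuclideanSpace.single i 1)

/-- Let `ρ` be a positive `C²` function on an open set `U ⊆ ℝ^d`
and `k : (0,∞) → (0,∞)` be `C¹`. With the auxiliary velocity field
`v = √(k(ρ)/ρ) ∇ρ`, one has, on `U`,
`div(k(ρ)∇ρ) = √(ρ k(ρ)) div v + (1/2)|v|² + (1/2) k'(ρ)|∇ρ|²`. -/
theorem stmt11 (d : ℕ) (U : Set (EuclideanSpace ℝ (Fin d))) (hU : IsOpen U)
    (ρ : EuclideanSpace ℝ (Fin d) → ℝ) (hρ : ContDiffOn ℝ 2 ρ U)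
    (hρ_pos : ∀ x ∈ U, 0 < ρ x)
    (k : ℝ → ℝ) (hk : ContDiffOn ℝ 1 k (Ioi 0)) (hk_pos : ∀ s ∈ Ioi (0 : ℝ), 0 < k s) :
    ∀ x ∈ U,
      (∑ i, pder d i (fun y => k (ρ y) * pder d i ρ y) x) =
        Real.sqrt (ρ x * k (ρ x))
            * (∑ i, pder d i (fun y => Real.sqrt (k (ρ y) / ρ y) * pder d i ρ y) x)
          + (1 / 2) * (∑ i, (Real.sqrt (k (ρ x) / ρ x) * pder d i ρ x) ^ 2)
          + (1 / 2) * deriv k (ρ x) * ∑ i, (pder d i ρ x) ^ 2 := by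
  intro x hx
  have hxU : U ∈ nhds x := hU.mem_nhds hx
  have ha0 : 0 < ρ x := hρ_pos x hx
  have hka : 0 < k (ρ x) := hk_pos _ ha0
  have hρx : ContDiffAt ℝ 2 ρ x := hρ.contDiffAt hxU
  have hkx : ContDiffAt ℝ 1 k (ρ x) := hk.contDiffAt (isOpen_Ioi.mem_nhds ha0)
  have hρd : DifferentiableAt ℝ ρ x := hρx.differentiableAt (by norm_num)
  have hρfd : HasFDerivAt ρ (fderiv ℝ ρ x) x := hρd.hasFDerivAt
  have hkd : HasDerivAt k (deriv k (ρ x)) (ρ x) :=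
    (hkx.differentiableAt one_ne_zero).hasDerivAt
  set a := ρ x with haa
  -- differentiability of the partial derivatives of ρ
  have hpder : ∀ i : Fin d, ContDiffAt ℝ 1 (pder d i ρ) x := by
    intro i
    have h1 : ContDiffAt ℝ 1 (fderiv ℝ ρ) x := hρx.fderiv_right (by norm_num)
    exact h1.clm_apply (contDiffAt_const (c := EuclideanSpace.single i 1))
  have hpi : ∀ i : Fin d, HasFDerivAt (pder d i ρ) (fderiv ℝ (pder d i ρ) x) x :=
    fun i => ((hpder i).differentiableAt one_ne_zero).hasFDerivAt
  -- derivative of s ↦ √(k s / s)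
  have hha : k a / a ≠ 0 := by positivity
  have hdiv : HasDerivAt (fun s => k s / s) ((deriv k a * a - k a * 1) / a ^ 2) a :=
    hkd.div (hasDerivAt_id a) ha0.ne'
  set c : ℝ := ((deriv k a * a - k a * 1) / a ^ 2) / (2 * Real.sqrt (k a / a)) with hc
  have hφ : HasDerivAt (fun s => Real.sqrt (k s / s)) c a := hdiv.sqrt hha
  -- the composed functions
  have hkρ : HasFDerivAt (fun y => k (ρ y)) ((deriv k a) • fderiv ℝ ρ x) x :=
    hkd.comp_hasFDerivAt x hρfd
  have hφρ : HasFDerivAt (fun y => Real.sqrt (k (ρ y) / ρ y)) (c • fderiv ℝ ρ x) x :=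
    hφ.comp_hasFDerivAt x hρfd
  -- LHS terms
  have hL : ∀ i : Fin d,
      pder d i (fun y => k (ρ y) * pder d i ρ y) x
        = k a * fderiv ℝ (pder d i ρ) x (EuclideanSpace.single i 1)
          + pder d i ρ x * (deriv k a * pder d i ρ x) := by
    intro i
    rw [pder, show (fun y => k (ρ y) * pder d i ρ y) = (fun y => k (ρ y)) * pder d i ρ from rfl,
      (hkρ.mul (hpi i)).fderiv]
    simp only [ContinuousLinearMap.add_apply, ContinuousLinearMap.smul_apply, smul_eq_mul, pder]
    rfl
  -- RHS main terms
  have hR : ∀ i : Fin d,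
      pder d i (fun y => Real.sqrt (k (ρ y) / ρ y) * pder d i ρ y) x
        = Real.sqrt (k a / a) * fderiv ℝ (pder d i ρ) x (EuclideanSpace.single i 1)
          + pder d i ρ x * (c * pder d i ρ x) := by
    intro i
    rw [pder, show (fun y => Real.sqrt (k (ρ y) / ρ y) * pder d i ρ y)
        = (fun y => Real.sqrt (k (ρ y) / ρ y)) * pder d i ρ from rfl, (hφρ.mul (hpi i)).fderiv]
    simp only [ContinuousLinearMap.add_apply, ContinuousLinearMap.smul_apply, smul_eq_mul, pder]
    rfl
  -- key algebraic identities for square roots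
  have hsq : Real.sqrt (k a / a) ^ 2 = k a / a := Real.sq_sqrt (by positivity)
  have hsqpos : 0 < Real.sqrt (k a / a) := Real.sqrt_pos.mpr (by positivity)
  have hs : Real.sqrt (a * k a) = a * Real.sqrt (k a / a) := by
    rw [← Real.sqrt_sq ha0.le, ← Real.sqrt_mul (by positivity)]
    congr 1
    field_simp
    ring
    rw [Real.sq_sqrt (sq_nonneg a)]
  -- pointwise identity
  have key : ∀ i : Fin d,
      k a * fderiv ℝ (pder d i ρ) x (EuclideanSpace.single i 1)
          + pder d i ρ x * (deriv k a * pder d i ρ x)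
        = Real.sqrt (a * k a)
            * (Real.sqrt (k a / a) * fderiv ℝ (pder d i ρ) x (EuclideanSpace.single i 1)
              + pder d i ρ x * (c * pder d i ρ x))
          + (1 / 2) * (Real.sqrt (k a / a) * pder d i ρ x) ^ 2
          + (1 / 2) * deriv k a * (pder d i ρ x) ^ 2 := by
    intro i
    rw [hs, hc]
    set w := Real.sqrt (k a / a) with hw
    have hane : a ≠ 0 := ha0.ne'
    have hwne : w ≠ 0 := hsqpos.ne'
    have hk2 : k a = w ^ 2 * a := by
      rw [hsq]; field_simp
    rw [hk2]
    field_simp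
    ring
  -- assemble
  rw [Finset.sum_congr rfl (fun i _ => hR i), Finset.sum_congr rfl (fun i _ => hL i),
    Finset.mul_sum, Finset.mul_sum, Finset.mul_sum, ← Finset.sum_add_distrib,
    ← Finset.sum_add_distrib]
  exact Finset.sum_congr rfl fun i _ => key i
end
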